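/- The Gray map satisfies Φ(u + v) = Φ(u) *_π Φ(v) for all u, v ∈ {0,1}^α × (Z/4Z)^β, where π is the involution swapping coordinates α+2k and α+2k+1 for each k; i.e., Φ is a group isomorphism from Z_2^α × Z_4^β to ({0,1}^{α+2β}, *_π). -/
import Mathlib


/-- The `Z₂Z₄` operation `x *_π y = x + y + (x + π(x))·(y + π(y))` on `(Z/2Z)^n`. -/
def star {n : ℕ} (π : Fin n → Fin n) (x y : Fin n → ZMod 2) : Fin n → ZMod 2 :=
  x + y + (x + x ∘ π) * (y + y ∘ π)

/-- `φ : Z/4Z → (Z/2Z)²` with `φ(0)=(0,0)`, `φ(1)=(0,1)`, `φ(2)=(1,1)`, `φ(3)=(1,0)`. -/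
def phi (q : ZMod 4) : ZMod 2 × ZMod 2 :=
  (if 2 ≤ q.val then 1 else 0, if q.val = 1 ∨ q.val = 2 then 1 else 0)

/-- The Gray map `Φ : {0,1}^α × (Z/4Z)^β → {0,1}^{α+2β}`. -/
def gray {α β : ℕ} (x : (Fin α → ZMod 2) × (Fin β → ZMod 4)) :
    Fin (α + 2 * β) → ZMod 2 :=
  fun i =>
    if h : (i : ℕ) < α then x.1 ⟨i, h⟩
    else if ((i : ℕ) - α) % 2 = 0 then
      (phi (x.2 ⟨((i : ℕ) - α) / 2, by have := i.isLt; omega⟩)).1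
    else
      (phi (x.2 ⟨((i : ℕ) - α) / 2, by have := i.isLt; omega⟩)).2

/-- The involution fixing the first `α` coordinates and swapping `α+2k` with
`α+2k+1` for each `k < β`. -/
def pairSwap {α β : ℕ} : Fin (α + 2 * β) → Fin (α + 2 * β) :=
  fun i =>
    if h : (i : ℕ) < α then i
    else if h2 : ((i : ℕ) - α) % 2 = 0 then ⟨(i : ℕ) + 1, by have := i.isLt; omega⟩
    else ⟨(i : ℕ) - 1, by have := i.isLt; omega⟩

lemma phi_add_fst : ∀ q r : ZMod 4,
    (phi (q + r)).1 = (phi q).1 + (phi r).1 +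
      ((phi q).1 + (phi q).2) * ((phi r).1 + (phi r).2) := by decide

lemma phi_add_snd : ∀ q r : ZMod 4,
    (phi (q + r)).2 = (phi q).2 + (phi r).2 +
      ((phi q).1 + (phi q).2) * ((phi r).1 + (phi r).2) := by decide

lemma star_apply {n : ℕ} (π : Fin n → Fin n) (x y : Fin n → ZMod 2) (i : Fin n) :
    star π x y i = x i + y i + (x i + x (π i)) * (y i + y (π i)) := rfl

lemma phi_inj : Function.Injective phi := by decide

/-- the Gray map satisfies `Φ(u + v) = Φ(u) *_π Φ(v)` for the
pair-swapping involution `π`, and it is bijective; i.e. `Φ` is a group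
isomorphism from `Z₂^α × Z₄^β` onto `({0,1}^{α+2β}, *_π)`. -/
theorem gray_isomorphism (α β : ℕ) :
    (∀ u v : (Fin α → ZMod 2) × (Fin β → ZMod 4),
      gray (u + v) = star (pairSwap (α := α) (β := β)) (gray u) (gray v)) ∧
    Function.Bijective (gray (α := α) (β := β)) := by
  have hstar : ∀ u v : (Fin α → ZMod 2) × (Fin β → ZMod 4),
      gray (u + v) = star (pairSwap (α := α) (β := β)) (gray u) (gray v) := by
    intro u v
    funext i
    rw [star_apply]
    by_cases h : (i : ℕ) < α
    · simp only [gray, pairSwap, h, dif_pos, Prod.fst_add, Pi.add_apply]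
      have : ∀ a : ZMod 2, a + a = 0 := by decide
      rw [this, this, zero_mul, add_zero]
    · have hlt := i.isLt
      by_cases h2 : ((i : ℕ) - α) % 2 = 0
      · have hπ : pairSwap (α := α) (β := β) i = ⟨(i : ℕ) + 1, by omega⟩ := by
          simp [pairSwap, h, h2]
        have h2' : (((i : ℕ) + 1) - α) % 2 ≠ 0 := by omega
        have hdiv : (((i : ℕ) + 1) - α) / 2 = ((i : ℕ) - α) / 2 := by omega
        simp only [gray, hπ, h, dif_neg, h2, if_pos, h2', if_neg, not_false_iff,
          hdiv, Prod.snd_add, Pi.add_apply]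
        have hA : ¬((i : ℕ) + 1 < α) := by omega
        simp only [dif_neg hA]
        exact phi_add_fst _ _
      · have hπ : pairSwap (α := α) (β := β) i = ⟨(i : ℕ) - 1, by omega⟩ := by
          simp [pairSwap, h, h2]
        have hge : α ≤ (i : ℕ) ∧ α < (i : ℕ) := by omega
        have h2' : (((i : ℕ) - 1) - α) % 2 = 0 := by omega
        have hdiv : (((i : ℕ) - 1) - α) / 2 = ((i : ℕ) - α) / 2 := by omega
        simp only [gray, hπ, h, dif_neg, h2, if_neg, not_false_iff, h2', if_pos,
          hdiv, Prod.snd_add, Pi.add_apply]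
        have hA : ¬((i : ℕ) - 1 < α) := by omega
        simp only [dif_neg hA]
        rw [phi_add_snd]
        ring
  refine ⟨hstar, ?_⟩
  rw [Fintype.bijective_iff_injective_and_card]
  constructor
  · intro x y hxy
    have happ : ∀ i, gray x i = gray y i := fun i => congrFun hxy i
    refine Prod.ext (funext fun j => ?_) (funext fun k => ?_)
    · have := happ ⟨j, by omega⟩
      simpa [gray, j.isLt] using this
    · have h1 := happ ⟨α + 2 * k, by omega⟩
      have h2 := happ ⟨α + 2 * k + 1, by omega⟩
      have e0 : ¬ (α + 2 * (k : ℕ) < α) := by omega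
      have e1 : ¬ (α + 2 * (k : ℕ) + 1 < α) := by omega
      have m0 : (α + 2 * (k : ℕ) - α) % 2 = 0 := by omega
      have m1 : (α + 2 * (k : ℕ) + 1 - α) % 2 ≠ 0 := by omega
      have d0 : (α + 2 * (k : ℕ) - α) / 2 = k := by omega
      have d1 : (α + 2 * (k : ℕ) + 1 - α) / 2 = k := by omega
      simp only [gray, e0, dif_neg, not_false_iff, m0, if_pos, d0] at h1
      simp only [gray, e1, dif_neg, not_false_iff, m1, if_neg, d1] at h2
      exact phi_inj (Prod.ext h1 h2)
  · simp only [Fintype.card_fun, Fintype.card_prod, Fintype.card_fin,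
      ZMod.card]
    rw [show (4 : ℕ) = 2 ^ 2 by norm_num, ← pow_mul, ← pow_add]
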